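/- Let λ be a partition of n and define v_λ ∈ S_n by tab^λ = v_λ·tab_λ. Then the number of elements w ∈ S_n with w ≤_L v_λ (in left weak Bruhat order) equals the number of standard Young tableaux of shape λ. -/

import Mathlib

def IsColSuperstandard (μ : YoungDiagram) (n : ℕ)
    (t : {c // c ∈ μ.cells} ≃ Fin n) : Prop :=
  ∀ c : {c // c ∈ μ.cells},
    ((t c : Fin n) : ℕ) = (∑ h ∈ Finset.range c.1.2, μ.colLen h) + c.1.1

def IsRowSuperstandard (μ : YoungDiagram) (n : ℕ)
    (t : {c // c ∈ μ.cells} ≃ Fin n) : Prop :=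
  ∀ c : {c // c ∈ μ.cells},
    ((t c : Fin n) : ℕ) = (∑ h ∈ Finset.range c.1.1, μ.rowLen h) + c.1.2

def invLen {n : ℕ} (w : Equiv.Perm (Fin n)) : ℕ :=
  (Finset.univ.filter fun p : Fin n × Fin n => p.1 < p.2 ∧ w p.2 < w p.1).card

def LeftWeakLE {n : ℕ} (u w : Equiv.Perm (Fin n)) : Prop :=
  invLen (w * u⁻¹) + invLen u = invLen w

def IsStandard (μ : YoungDiagram) (n : ℕ)
    (t : {c // c ∈ μ.cells} ≃ Fin n) : Prop :=
  (∀ c c' : {c // c ∈ μ.cells}, (c.1).1 = (c'.1).1 → (c.1).2 < (c'.1).2 → t c < t c') ∧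
  (∀ c c' : {c // c ∈ μ.cells}, (c.1).2 = (c'.1).2 → (c.1).1 < (c'.1).1 → t c < t c')

/-!
`w ≤_L v` holds iff every inversion of `w` is an inversion of `v`, because the inversions of
`v * w⁻¹` correspond to the symmetric difference of the two inversion sets. Read through the column
superstandard tableau, a pair of cells is a non-inversion of `v_λ` iff the column and the row
reading orders agree on it, i.e. iff the two cells are comparable in the product order. Hence
`w ≤_L v_λ` iff `w · tab_λ` increases along the product order, i.e. iff it is standard, and
`w ↦ w · tab_λ` is the required bijection.
-/

open Finset

section WeakOrder

variable {n : ℕ}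

def invSet (w : Equiv.Perm (Fin n)) : Finset (Fin n × Fin n) :=
  {p | p.1 < p.2 ∧ w p.2 < w p.1}

lemma invLen_eq_card_invSet (w : Equiv.Perm (Fin n)) : invLen w = #(invSet w) := rfl

/-- Reindexed by `u`, the inversions of `w * u⁻¹` are the pairs that `u` and `w` order oppositely;
sorting each such pair puts it in `invSet w \ invSet u` or, swapped, in `invSet u \ invSet w`. -/
lemma invLen_mul_inv (u w : Equiv.Perm (Fin n)) :
    invLen (w * u⁻¹) = #(invSet w \ invSet u) + #(invSet u \ invSet w) := by
  set S : Finset (Fin n × Fin n) := {p | u p.1 < u p.2 ∧ w p.2 < w p.1}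
  have hS : #S = #(invSet (w * u⁻¹)) := by
    refine card_equiv (u.prodCongr u) fun p => ?_
    rw [invSet, mem_filter, mem_filter]
    simp
  have hlt : #(S.filter fun p => p.1 < p.2) = #(invSet w \ invSet u) := by
    congr 1
    ext p
    simp only [S, invSet, mem_filter, mem_sdiff, mem_univ, true_and, not_and, not_lt]
    have hu := u.injective.ne_iff (x := p.1) (y := p.2)
    grind
  have hgt : #(S.filter fun p => ¬ p.1 < p.2) = #(invSet u \ invSet w) := by
    refine card_equiv (Equiv.prodComm _ _) fun p => ?_
    simp only [S, invSet, mem_filter, mem_sdiff, mem_univ, true_and, not_and, not_lt]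
    have hw := w.injective.ne_iff (x := p.1) (y := p.2)
    grind
  rw [invLen_eq_card_invSet, ← hS,
    ← card_filter_add_card_filter_not (fun p : Fin n × Fin n => p.1 < p.2), hlt, hgt]

lemma leftWeakLE_iff_invSet_subset (u w : Equiv.Perm (Fin n)) :
    LeftWeakLE u w ↔ invSet u ⊆ invSet w := by
  have hu := card_sdiff_add_card_inter (invSet u) (invSet w)
  have hw := card_sdiff_add_card_inter (invSet w) (invSet u)
  rw [inter_comm] at hw
  rw [LeftWeakLE, invLen_mul_inv, invLen_eq_card_invSet, invLen_eq_card_invSet,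
    ← sdiff_eq_empty_iff_subset, ← card_eq_zero]
  omega

lemma leftWeakLE_iff (u w : Equiv.Perm (Fin n)) :
    LeftWeakLE u w ↔ ∀ i j, i < j → w i < w j → u i < u j := by
  have ascent_iff (v : Equiv.Perm (Fin n)) {i j : Fin n} (h : i < j) : v i < v j ↔ ¬ v j < v i :=
    (not_lt.trans (v.injective.ne h.ne).le_iff_lt).symm
  simp only [leftWeakLE_iff_invSet_subset, invSet, subset_iff, mem_filter, mem_univ, true_and,
    Prod.forall, and_imp]
  refine forall₂_congr fun i j => ?_
  by_cases hij : i < j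
  · simp only [hij, ascent_iff _ hij, true_and, forall_const]
    tauto
  · simp [hij]

end WeakOrder

lemma sum_range_add_lt_sum_range_add_iff {f : ℕ → ℕ} {a a' b b' : ℕ} (hb : b < f a)
    (hb' : b' < f a') :
    ∑ h ∈ range a, f h + b < ∑ h ∈ range a', f h + b' ↔ a < a' ∨ a = a' ∧ b < b' := by
  have below {a a' b : ℕ} (hb : b < f a) (h : a < a') :
      ∑ h ∈ range a, f h + b < ∑ h ∈ range a', f h :=
    calc ∑ h ∈ range a, f h + b < ∑ h ∈ range (a + 1), f h := by rw [sum_range_succ]; omega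
      _ ≤ ∑ h ∈ range a', f h := sum_le_sum_of_subset (range_subset_range.2 h)
  rcases lt_trichotomy a a' with h | rfl | h
  · have := below hb h
    omega
  · omega
  · have := below hb' h
    omega

section Young

variable {μ : YoungDiagram} {n : ℕ} {t tcol trow : {c // c ∈ μ.cells} ≃ Fin n}

lemma IsColSuperstandard.lt_iff (h : IsColSuperstandard μ n t) (c c' : {c // c ∈ μ.cells}) :
    t c < t c' ↔ c.1.2 < c'.1.2 ∨ c.1.2 = c'.1.2 ∧ c.1.1 < c'.1.1 := by
  rw [Fin.lt_def, h c, h c']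
  exact sum_range_add_lt_sum_range_add_iff (μ.mem_iff_lt_colLen.1 c.2)
    (μ.mem_iff_lt_colLen.1 c'.2)

lemma IsRowSuperstandard.lt_iff (h : IsRowSuperstandard μ n t) (c c' : {c // c ∈ μ.cells}) :
    t c < t c' ↔ c.1.1 < c'.1.1 ∨ c.1.1 = c'.1.1 ∧ c.1.2 < c'.1.2 := by
  rw [Fin.lt_def, h c, h c']
  exact sum_range_add_lt_sum_range_add_iff (μ.mem_iff_lt_rowLen.1 c.2)
    (μ.mem_iff_lt_rowLen.1 c'.2)

lemma lt_and_lt_iff_lt (htcol : IsColSuperstandard μ n tcol) (htrow : IsRowSuperstandard μ n trow)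
    (c c' : {c // c ∈ μ.cells}) : tcol c < tcol c' ∧ trow c < trow c' ↔ c < c' := by
  rw [htcol.lt_iff, htrow.lt_iff, ← Subtype.coe_lt_coe, Prod.lt_iff]
  omega

lemma isStandard_iff_strictMono : IsStandard μ n t ↔ StrictMono t := by
  refine ⟨fun ⟨hrow, hcol⟩ c c' hcc' => ?_, fun ht => ⟨fun c c' _ _ => ht ?_, fun c c' _ _ => ht ?_⟩⟩
  · have along_row {c c' : {c // c ∈ μ.cells}} (h1 : c.1.1 = c'.1.1) (h2 : c.1.2 ≤ c'.1.2) :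
        t c ≤ t c' := by
      rcases h2.lt_or_eq with h2 | h2
      · exact (hrow c c' h1 h2).le
      · rw [Subtype.ext (Prod.ext h1 h2)]
    have along_col {c c' : {c // c ∈ μ.cells}} (h1 : c.1.1 ≤ c'.1.1) (h2 : c.1.2 = c'.1.2) :
        t c ≤ t c' := by
      rcases h1.lt_or_eq with h1 | h1
      · exact (hcol c c' h2 h1).le
      · rw [Subtype.ext (Prod.ext h1 h2)]
    have hle := (Subtype.coe_lt_coe.2 hcc').le
    let corner : {c // c ∈ μ.cells} := ⟨(c.1.1, c'.1.2), μ.up_left_mem hle.1 le_rfl c'.2⟩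
    refine lt_of_le_of_ne ?_ (t.injective.ne hcc'.ne)
    calc t c ≤ t corner := along_row rfl hle.2
      _ ≤ t c' := along_col hle.1 rfl
  all_goals rw [← Subtype.coe_lt_coe, Prod.lt_iff]; omega

lemma leftWeakLE_iff_isStandard (htcol : IsColSuperstandard μ n tcol)
    (htrow : IsRowSuperstandard μ n trow) {vlam : Equiv.Perm (Fin n)} (hv : trow = tcol.trans vlam)
    (w : Equiv.Perm (Fin n)) : LeftWeakLE w vlam ↔ IsStandard μ n (tcol.trans w) := by
  rw [leftWeakLE_iff, isStandard_iff_strictMono]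
  constructor
  · intro h c c' hcc'
    obtain ⟨h1, h2⟩ := (lt_and_lt_iff_lt htcol htrow c c').2 hcc'
    exact h _ _ h1 (by simpa [hv] using h2)
  · intro h i j hij hvij
    simpa using h ((lt_and_lt_iff_lt htcol htrow (tcol.symm i) (tcol.symm j)).1
      ⟨by simpa using hij, by simpa [hv] using hvij⟩)

end Young

theorem card_leftWeak_le_vlambda_eq_card_standard_general (μ : YoungDiagram) (n : ℕ)
    (tcol trow : {c // c ∈ μ.cells} ≃ Fin n)
    (htcol : IsColSuperstandard μ n tcol) (htrow : IsRowSuperstandard μ n trow)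
    (vlam : Equiv.Perm (Fin n)) (hv : trow = tcol.trans vlam) :
    Nat.card {w : Equiv.Perm (Fin n) // LeftWeakLE w vlam} =
      Nat.card {t : {c // c ∈ μ.cells} ≃ Fin n // IsStandard μ n t} :=
  Nat.card_congr ((tcol.symm.equivCongr (Equiv.refl _)).subtypeEquiv
    (leftWeakLE_iff_isStandard htcol htrow hv))

/-- The number of elements `w ∈ S_n` with `w ≤_L v_λ` equals the number of
standard Young tableaux of shape `λ`. -/
theorem card_leftWeak_le_vlambda_eq_card_standard (μ : YoungDiagram) (n : ℕ)
    (hcard : μ.card = n) (tcol trow : {c // c ∈ μ.cells} ≃ Fin n)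
    (htcol : IsColSuperstandard μ n tcol) (htrow : IsRowSuperstandard μ n trow)
    (vlam : Equiv.Perm (Fin n)) (hv : trow = tcol.trans vlam) :
    Nat.card {w : Equiv.Perm (Fin n) // LeftWeakLE w vlam} =
      Nat.card {t : {c // c ∈ μ.cells} ≃ Fin n // IsStandard μ n t} :=
  card_leftWeak_le_vlambda_eq_card_standard_general μ n tcol trow htcol htrow vlam hv
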